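/- arXiv:1103.1421 — 8 statements merged into one kernel-verified Lean document; each statement's English description precedes it below -/
import Mathlib

section
/- Let ā < b̄ be real numbers and let Ω = [ā, b̄]. Let ρ : Ω → ℝ be a nonnegative integrable function and let M, K > 0 be constants with M ≤ ∫_Ω ρ(y) dy ≤ K. Then for every continuously differentiable function v : Ω → ℝ (for which ρ·v is integrable on Ω) and every x ∈ Ω, one has |v(x)| ≤ (K/M) ∫_Ω |v'(y)| dy + (1/M) |∫_Ω ρ(y) v(y) dy|. -/
/-!
Averaging `v x - v y` against the weight `ρ` gives
`v x * ∫ ρ - ∫ ρ v = ∫ ρ(y) (v x - v y) dy`, and by the fundamental theorem of calculus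
every `|v x - v y|` is at most the total variation `∫ |v'|`. Hence
`M |v x| ≤ (∫ ρ) |v x| ≤ (∫ ρ) ∫ |v'| + |∫ ρ v| ≤ K ∫ |v'| + |∫ ρ v|`.
-/

open MeasureTheory Set

theorem abs_sub_le_integral_abs_deriv_of_le {a b c d : ℝ} {v v' : ℝ → ℝ}
    (hv : ∀ y ∈ Icc a b, HasDerivWithinAt v (v' y) (Icc a b) y)
    (hv' : IntegrableOn v' (Icc a b)) (hc : c ∈ Icc a b) (hd : d ∈ Icc a b) (hcd : c ≤ d) :
    |v d - v c| ≤ ∫ t in Icc a b, |v' t| := by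
  have hsub : Icc c d ⊆ Icc a b := Icc_subset_Icc hc.1 hd.2
  have ftc : ∫ t in c..d, v' t = v d - v c := by
    refine intervalIntegral.integral_eq_sub_of_hasDeriv_right_of_le hcd
      (fun t ht => (hv t (hsub ht)).continuousWithinAt.mono hsub) (fun t ht => ?_) ?_
    · have ht' : t ∈ Ioo a b := ⟨hc.1.trans_lt ht.1, ht.2.trans_le hd.2⟩
      exact ((hv t (Ioo_subset_Icc_self ht')).hasDerivAt
        (Icc_mem_nhds ht'.1 ht'.2)).hasDerivWithinAt
    · exact (hv'.mono_set (by rwa [uIcc_of_le hcd])).intervalIntegrable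
  calc |v d - v c| = |∫ t in c..d, v' t| := by rw [ftc]
    _ ≤ ∫ t in c..d, |v' t| := intervalIntegral.abs_integral_le_integral_abs hcd
    _ = ∫ t in Ioc c d, |v' t| := intervalIntegral.integral_of_le hcd
    _ ≤ ∫ t in Icc a b, |v' t| :=
      setIntegral_mono_set hv'.abs (.of_forall fun _ => abs_nonneg _)
        (Ioc_subset_Icc_self.trans hsub).eventuallyLE

theorem abs_sub_le_integral_abs_deriv {a b x y : ℝ} {v v' : ℝ → ℝ}
    (hv : ∀ y ∈ Icc a b, HasDerivWithinAt v (v' y) (Icc a b) y)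
    (hv' : IntegrableOn v' (Icc a b)) (hx : x ∈ Icc a b) (hy : y ∈ Icc a b) :
    |v x - v y| ≤ ∫ t in Icc a b, |v' t| := by
  rcases le_total y x with h | h
  · exact abs_sub_le_integral_abs_deriv_of_le hv hv' hy hx h
  · rw [abs_sub_comm]
    exact abs_sub_le_integral_abs_deriv_of_le hv hv' hx hy h

theorem abs_mul_integral_sub_integral_mul_le {α : Type*} [MeasurableSpace α] {μ : Measure α}
    {ρ f : α → ℝ} {c J : ℝ} (hρ0 : ∀ᵐ y ∂μ, 0 ≤ ρ y) (hρ : Integrable ρ μ)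
    (hρf : Integrable (fun y => ρ y * f y) μ) (hf : ∀ᵐ y ∂μ, |c - f y| ≤ J) :
    |c * ∫ y, ρ y ∂μ - ∫ y, ρ y * f y ∂μ| ≤ J * ∫ y, ρ y ∂μ := by
  have hdiff : c * ∫ y, ρ y ∂μ - ∫ y, ρ y * f y ∂μ = ∫ y, ρ y * (c - f y) ∂μ := by
    simp only [mul_sub]
    rw [integral_sub (hρ.mul_const c) hρf, integral_mul_const, mul_comm]
  rw [hdiff, ← integral_const_mul, ← Real.norm_eq_abs]
  refine norm_integral_le_of_norm_le (hρ.const_mul J) ?_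
  filter_upwards [hρ0, hf] with y hy hfy
  rw [Real.norm_eq_abs, abs_mul, abs_of_nonneg hy, mul_comm J]
  exact mul_le_mul_of_nonneg_left hfy hy

theorem stmt_0_general (a b : ℝ) (ρ v v' : ℝ → ℝ) (M K : ℝ)
    (hM : 0 < M)
    (hρ0 : ∀ y ∈ Icc a b, 0 ≤ ρ y)
    (hρint : IntegrableOn ρ (Icc a b))
    (hlow : M ≤ ∫ y in Icc a b, ρ y)
    (hup : (∫ y in Icc a b, ρ y) ≤ K)
    (hv : ∀ y ∈ Icc a b, HasDerivWithinAt v (v' y) (Icc a b) y)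
    (hv' : ContinuousOn v' (Icc a b))
    (hρv : IntegrableOn (fun y => ρ y * v y) (Icc a b)) :
    ∀ x ∈ Icc a b,
      |v x| ≤ (K / M) * (∫ y in Icc a b, |v' y|)
        + (1 / M) * |∫ y in Icc a b, ρ y * v y| := by
  intro x hx
  set I := ∫ y in Icc a b, ρ y
  set J := ∫ y in Icc a b, |v' y|
  set A := ∫ y in Icc a b, ρ y * v y
  have hJ : 0 ≤ J := setIntegral_nonneg measurableSet_Icc fun _ _ => abs_nonneg _
  have hosc : |v x * I - A| ≤ J * I :=
    abs_mul_integral_sub_integral_mul_le (ae_restrict_of_forall_mem measurableSet_Icc hρ0) hρint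
      hρv (ae_restrict_of_forall_mem measurableSet_Icc fun y hy =>
        abs_sub_le_integral_abs_deriv hv hv'.integrableOn_Icc hx hy)
  have hmain : M * |v x| ≤ K * J + |A| :=
    calc M * |v x| ≤ |v x| * I := by
          rw [mul_comm]
          exact mul_le_mul_of_nonneg_left hlow (abs_nonneg _)
      _ = |v x * I| := by rw [abs_mul, abs_of_nonneg (hM.le.trans hlow)]
      _ ≤ |v x * I - A| + |A| := by linarith [abs_sub_abs_le_abs_sub (v x * I) A]
      _ ≤ K * J + |A| := by linarith [mul_le_mul_of_nonneg_left hup hJ]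
  rw [div_mul_eq_mul_div, one_div_mul_eq_div, ← add_div, le_div_iff₀ hM, mul_comm]
  exact hmain

/-- Lemma 2.1: weighted sup-norm estimate on a bounded interval. -/
theorem stmt_0 (a b : ℝ) (hab : a < b) (ρ v v' : ℝ → ℝ) (M K : ℝ)
    (hM : 0 < M) (hK : 0 < K)
    (hρ0 : ∀ y ∈ Icc a b, 0 ≤ ρ y)
    (hρint : IntegrableOn ρ (Icc a b))
    (hlow : M ≤ ∫ y in Icc a b, ρ y)
    (hup : (∫ y in Icc a b, ρ y) ≤ K)
    (hv : ∀ y ∈ Icc a b, HasDerivWithinAt v (v' y) (Icc a b) y)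
    (hv' : ContinuousOn v' (Icc a b))
    (hρv : IntegrableOn (fun y => ρ y * v y) (Icc a b)) :
    ∀ x ∈ Icc a b,
      |v x| ≤ (K / M) * (∫ y in Icc a b, |v' y|)
        + (1 / M) * |∫ y in Icc a b, ρ y * v y| :=
  stmt_0_general a b ρ v v' M K hM hρ0 hρint hlow hup hv hv' hρv
end

section
/- Let I = [0,1]. For all constants M, K, c̄ > 0 and every exponent l > 0 there exists a constant C > 0, depending only on M, K, l and c̄, with the following property: for every nonnegative integrable function ρ : I → ℝ with M ≤ ∫_I ρ ≤ K, and every continuous function v : I → ℝ with v ≥ 0 such that the function w = v^l is continuously differentiable on I and ∫_I ρ(y) v(y) dy ≤ c̄, one has sup_{x ∈ I} v(x)^l ≤ C (∫_I (w'(y))² dy)^{1/2} + C. -/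
/-!
Let `y₀` be a minimum point of `v` on `I`. Since `ρ ≥ 0` has mass at least `M`, the bound
`∫ ρ v ≤ c̄` forces `v y₀ ≤ c̄ / M`. By the fundamental theorem of calculus
`w x ≤ w y₀ + ∫_I |w'|`, and on the unit interval `∫_I |w'| ≤ ‖w'‖_{L²}` by
Cauchy–Schwarz, so `C = (c̄ / M) ^ l + 1` works.
-/

open MeasureTheory Set ProbabilityTheory

theorem integral_abs_le_sqrt_integral_sq {Ω : Type*} [MeasurableSpace Ω] {μ : Measure Ω}
    [IsProbabilityMeasure μ] {f : Ω → ℝ} (hf : MemLp f 2 μ) :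
    ∫ ω, |f ω| ∂μ ≤ √(∫ ω, f ω ^ 2 ∂μ) := by
  have hvar := variance_nonneg (|f|) μ
  rw [variance_eq_sub hf.abs] at hvar
  simp only [Pi.pow_apply, Pi.abs_apply, sq_abs] at hvar
  exact Real.le_sqrt_of_sq_le (by linarith)

theorem ContinuousOn.setIntegral_abs_le_sqrt_setIntegral_sq {f : ℝ → ℝ}
    (hf : ContinuousOn f (Icc 0 1)) :
    ∫ t in Icc 0 1, |f t| ≤ √(∫ t in Icc 0 1, f t ^ 2) := by
  have : IsProbabilityMeasure (volume.restrict (Icc (0 : ℝ) 1)) := ⟨by simp⟩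
  obtain ⟨B, hB⟩ := isCompact_Icc.exists_bound_of_continuousOn hf
  refine integral_abs_le_sqrt_integral_sq (MemLp.of_bound
    (hf.aestronglyMeasurable measurableSet_Icc) B ?_)
  exact (ae_restrict_mem measurableSet_Icc).mono hB

theorem IsMinOn.mul_setIntegral_le {X : Type*} [MeasurableSpace X] {μ : Measure X}
    {s : Set X} {ρ v : X → ℝ} {y : X} (hmin : IsMinOn v s y) (hs : MeasurableSet s)
    (hρ : ∀ x ∈ s, 0 ≤ ρ x) (hρi : IntegrableOn ρ s μ)
    (hρv : IntegrableOn (fun x => ρ x * v x) s μ) :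
    v y * ∫ x in s, ρ x ∂μ ≤ ∫ x in s, ρ x * v x ∂μ := by
  rw [← integral_const_mul]
  refine setIntegral_mono_on (hρi.const_mul _) hρv hs fun x hx => ?_
  rw [mul_comm]
  exact mul_le_mul_of_nonneg_left (hmin hx) (hρ x hx)

theorem abs_sub_le_setIntegral_abs_deriv {f f' : ℝ → ℝ} {a b x y : ℝ}
    (hf : ∀ t ∈ Icc a b, HasDerivWithinAt f (f' t) (Icc a b) t)
    (hf' : IntegrableOn f' (Icc a b)) (hx : x ∈ Icc a b) (hy : y ∈ Icc a b) :
    |f y - f x| ≤ ∫ t in Icc a b, |f' t| := by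
  wlog hxy : x ≤ y generalizing x y
  · rw [abs_sub_comm]
    exact this hy hx (le_of_not_ge hxy)
  have hsub : Icc x y ⊆ Icc a b := Icc_subset_Icc hx.1 hy.2
  have hIoc : Ioc x y ⊆ Icc a b := Ioc_subset_Icc_self.trans hsub
  rw [← intervalIntegral.integral_eq_sub_of_hasDerivAt_of_le hxy
    (fun t ht => (hf t (hsub ht)).continuousWithinAt.mono hsub)
    (fun t ht => (hf t (hsub (Ioo_subset_Icc_self ht))).hasDerivAt
      (Icc_mem_nhds (hx.1.trans_lt ht.1) (ht.2.trans_le hy.2)))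
    ((intervalIntegrable_iff_integrableOn_Ioc_of_le hxy).2 (hf'.mono_set hIoc))]
  calc |∫ t in x..y, f' t| ≤ ∫ t in x..y, |f' t| :=
        intervalIntegral.abs_integral_le_integral_abs hxy
    _ = ∫ t in Ioc x y, |f' t| := intervalIntegral.integral_of_le hxy
    _ ≤ ∫ t in Icc a b, |f' t| :=
        setIntegral_mono_set hf'.abs (Filter.Eventually.of_forall fun t => abs_nonneg _)
          hIoc.eventuallyLE

theorem stmt_1_general (M K cbar l : ℝ) (hM : 0 < M) (hc : 0 < cbar) (hl : 0 < l) :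
    ∃ C : ℝ, 0 < C ∧ ∀ (ρ v w' : ℝ → ℝ),
      (∀ y ∈ Icc (0:ℝ) 1, 0 ≤ ρ y) →
      IntegrableOn ρ (Icc (0:ℝ) 1) →
      M ≤ (∫ y in Icc (0:ℝ) 1, ρ y) →
      (∫ y in Icc (0:ℝ) 1, ρ y) ≤ K →
      ContinuousOn v (Icc (0:ℝ) 1) →
      (∀ y ∈ Icc (0:ℝ) 1, 0 ≤ v y) →
      (∀ y ∈ Icc (0:ℝ) 1, HasDerivWithinAt (fun x => v x ^ l) (w' y) (Icc (0:ℝ) 1) y) →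
      ContinuousOn w' (Icc (0:ℝ) 1) →
      (∫ y in Icc (0:ℝ) 1, ρ y * v y) ≤ cbar →
      ∀ x ∈ Icc (0:ℝ) 1,
        v x ^ l ≤ C * (∫ y in Icc (0:ℝ) 1, (w' y) ^ 2) ^ ((1:ℝ)/2) + C := by
  refine ⟨(cbar / M) ^ l + 1, by positivity, ?_⟩
  intro ρ v w' hρ hρi hMρ _ hv hv0 hw hw' hρv x hx
  obtain ⟨y₀, hy₀, hmin⟩ := isCompact_Icc.exists_isMinOn (nonempty_Icc.2 zero_le_one) hv
  have hvy₀ : v y₀ ≤ cbar / M := by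
    rw [le_div_iff₀ hM]
    calc v y₀ * M ≤ v y₀ * ∫ y in Icc (0:ℝ) 1, ρ y :=
          mul_le_mul_of_nonneg_left hMρ (hv0 y₀ hy₀)
      _ ≤ ∫ y in Icc (0:ℝ) 1, ρ y * v y := hmin.mul_setIntegral_le measurableSet_Icc hρ hρi
          (hρi.mul_continuousOn hv isCompact_Icc)
      _ ≤ cbar := hρv
  have hosc := abs_sub_le_setIntegral_abs_deriv hw (hw'.integrableOn_compact isCompact_Icc) hy₀ hx
  have hL2 := hw'.setIntegral_abs_le_sqrt_setIntegral_sq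
  rw [Real.sqrt_eq_rpow] at hL2
  have hS : 0 ≤ (∫ y in Icc (0:ℝ) 1, (w' y) ^ 2) ^ ((1:ℝ)/2) := by positivity
  have hA : 0 ≤ (cbar / M) ^ l := by positivity
  calc v x ^ l ≤ v y₀ ^ l + ∫ y in Icc (0:ℝ) 1, |w' y| := by
        linarith [le_abs_self (v x ^ l - v y₀ ^ l)]
    _ ≤ (cbar / M) ^ l + (∫ y in Icc (0:ℝ) 1, (w' y) ^ 2) ^ ((1:ℝ)/2) :=
        add_le_add (Real.rpow_le_rpow (hv0 y₀ hy₀) hvy₀ hl.le) hL2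
    _ ≤ _ := by nlinarith

/-- Corollary 2.1: weighted sup-norm bound for powers on I = [0,1]. -/
theorem stmt_1 (M K cbar l : ℝ) (hM : 0 < M) (hK : 0 < K) (hc : 0 < cbar) (hl : 0 < l) :
    ∃ C : ℝ, 0 < C ∧ ∀ (ρ v w' : ℝ → ℝ),
      (∀ y ∈ Icc (0:ℝ) 1, 0 ≤ ρ y) →
      IntegrableOn ρ (Icc (0:ℝ) 1) →
      M ≤ (∫ y in Icc (0:ℝ) 1, ρ y) →
      (∫ y in Icc (0:ℝ) 1, ρ y) ≤ K →
      ContinuousOn v (Icc (0:ℝ) 1) →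
      (∀ y ∈ Icc (0:ℝ) 1, 0 ≤ v y) →
      (∀ y ∈ Icc (0:ℝ) 1, HasDerivWithinAt (fun x => v x ^ l) (w' y) (Icc (0:ℝ) 1) y) →
      ContinuousOn w' (Icc (0:ℝ) 1) →
      (∫ y in Icc (0:ℝ) 1, ρ y * v y) ≤ cbar →
      ∀ x ∈ Icc (0:ℝ) 1,
        v x ^ l ≤ C * (∫ y in Icc (0:ℝ) 1, (w' y) ^ 2) ^ ((1:ℝ)/2) + C :=
  stmt_1_general M K cbar l hM hc hl
end

section
/- Let m ≥ 1 be an integer and let a > 0. Then there exists a constant c > 0, depending only on a and m (in particular independent of b), such that for every b > a and every continuously differentiable function u : [a,b] → ℝ with u(a) = 0, one has sup_{r ∈ [a,b]} |u(r)| ≤ c (∫_a^b ( r^m u'(r)² + m r^{m−2} u(r)² ) dr)^{1/2}. -/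
open MeasureTheory Set

/-!
On `[a, r]` the function `g s = s ^ (m - 1) * u s ^ 2` vanishes at `a`, and its derivative is
dominated by the energy density, the difference being `s ^ (m - 2) * (u s - s * u' s) ^ 2 ≥ 0`.
Hence `r ^ (m - 1) * u r ^ 2 = g r - g a` is at most the energy on `[a, r]`, thus at most the
energy on `[a, b]`, and `a ^ (m - 1) ≤ r ^ (m - 1)` because `m ≥ 1`, which gives the constant
`c = a ^ ((1 - m) / 2)`, independent of `b`.
-/

noncomputable def radialEnergyDensity (p : ℝ) (u u' : ℝ → ℝ) (s : ℝ) : ℝ :=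
  s ^ p * u' s ^ 2 + p * s ^ (p - 2) * u s ^ 2

theorem radialEnergyDensity_nonneg {p s : ℝ} (hp : 0 ≤ p) (hs : 0 < s) (u u' : ℝ → ℝ) :
    0 ≤ radialEnergyDensity p u u' s := by
  unfold radialEnergyDensity
  positivity

theorem continuousOn_radialEnergyDensity {p : ℝ} {S : Set ℝ} {u u' : ℝ → ℝ}
    (hS : ∀ s ∈ S, 0 < s) (hu : ContinuousOn u S) (hu' : ContinuousOn u' S) :
    ContinuousOn (radialEnergyDensity p u u') S := by
  have hrpow (q : ℝ) : ContinuousOn (fun s : ℝ => s ^ q) S :=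
    continuousOn_id.rpow_const fun s hs => Or.inl (hS s hs).ne'
  exact ((hrpow p).mul (hu'.pow 2)).add ((continuousOn_const.mul (hrpow _)).mul (hu.pow 2))

theorem deriv_rpow_sub_one_mul_sq_le (p : ℝ) {s : ℝ} (hs : 0 < s) (u v : ℝ) :
    (p - 1) * s ^ (p - 2) * u ^ 2 + s ^ (p - 1) * (2 * u * v) ≤
      s ^ p * v ^ 2 + p * s ^ (p - 2) * u ^ 2 := by
  have h₁ : s ^ (p - 1) = s ^ (p - 2) * s := by
    rw [← Real.rpow_add_one hs.ne']; ring_nf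
  have h₂ : s ^ p = s ^ (p - 2) * s * s := by
    rw [← Real.rpow_add_one hs.ne', ← Real.rpow_add_one hs.ne']; ring_nf
  have key : 0 ≤ s ^ (p - 2) * (u - s * v) ^ 2 := by positivity
  rw [h₁, h₂]
  nlinarith [key]

theorem rpow_sub_one_mul_sq_le_setIntegral {p a r : ℝ} {u u' : ℝ → ℝ} (ha : 0 < a)
    (har : a ≤ r) (hu : ∀ x ∈ Icc a r, HasDerivWithinAt u (u' x) (Icc a r) x)
    (hint : IntegrableOn (radialEnergyDensity p u u') (Icc a r)) (hua : u a = 0) :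
    r ^ (p - 1) * u r ^ 2 ≤ ∫ s in Icc a r, radialEnergyDensity p u u' s := by
  have hg : ∀ x ∈ Icc a r, HasDerivWithinAt (fun s => s ^ (p - 1) * u s ^ 2)
      ((p - 1) * x ^ (p - 2) * u x ^ 2 + x ^ (p - 1) * (2 * u x * u' x)) (Icc a r) x := by
    intro x hx
    have hrpow := (Real.hasDerivAt_rpow_const (p := p - 1)
      (Or.inl (ha.trans_le hx.1).ne')).hasDerivWithinAt (s := Icc a r)
    refine (hrpow.mul ((hu x hx).pow 2)).congr_deriv ?_
    rw [show p - 1 - 1 = p - 2 by ring]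
    simp only [Pi.pow_apply, Nat.cast_ofNat]
    ring
  have hg_cont : ContinuousOn (fun s => s ^ (p - 1) * u s ^ 2) (Icc a r) :=
    fun x hx => (hg x hx).continuousWithinAt
  have := intervalIntegral.sub_le_integral_of_hasDeriv_right_of_le har hg_cont
    (fun x hx => ((hg x (Ioo_subset_Icc_self hx)).hasDerivAt
      (Icc_mem_nhds hx.1 hx.2)).hasDerivWithinAt)
    hint (fun x hx => deriv_rpow_sub_one_mul_sq_le p (ha.trans hx.1) (u x) (u' x))
  rwa [hua, zero_pow two_ne_zero, mul_zero, sub_zero, intervalIntegral.integral_of_le har,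
    ← integral_Icc_eq_integral_Ioc] at this

theorem abs_le_inv_sqrt_mul_rpow_half {w x I : ℝ} (hw : 0 < w) (h : w * x ^ 2 ≤ I) :
    |x| ≤ (√w)⁻¹ * I ^ (1 / 2 : ℝ) := by
  have hx : x ^ 2 ≤ I / w := by rw [le_div_iff₀ hw]; linarith
  calc |x| = √(x ^ 2) := (Real.sqrt_sq_eq_abs x).symm
    _ ≤ √(I / w) := Real.sqrt_le_sqrt hx
    _ = (√w)⁻¹ * I ^ (1 / 2 : ℝ) := by
      rw [Real.sqrt_div' _ hw.le, Real.sqrt_eq_rpow, div_eq_inv_mul]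

/-- The weighted radial Sobolev inequality (2.3) for spherically symmetric
functions vanishing at the inner boundary `r = a`. -/
theorem stmt_3 (m : ℕ) (hm : 1 ≤ m) (a : ℝ) (ha : 0 < a) :
    ∃ c : ℝ, 0 < c ∧ ∀ b : ℝ, a < b → ∀ u u' : ℝ → ℝ,
      (∀ r ∈ Icc a b, HasDerivWithinAt u (u' r) (Icc a b) r) →
      ContinuousOn u' (Icc a b) →
      u a = 0 →
      ∀ r ∈ Icc a b,
        |u r| ≤ c * (∫ s in Icc a b,
          (s ^ (m:ℝ) * (u' s) ^ 2 + (m:ℝ) * s ^ ((m:ℝ) - 2) * (u s) ^ 2)) ^ ((1:ℝ)/2) := by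
  have hm_real : (1 : ℝ) ≤ m := by exact_mod_cast hm
  refine ⟨(√(a ^ ((m : ℝ) - 1)))⁻¹, by positivity, fun b _ u u' hu hu' hua r hr => ?_⟩
  have hpos : ∀ s ∈ Icc a b, 0 < s := fun s hs => ha.trans_le hs.1
  have hsub : Icc a r ⊆ Icc a b := Icc_subset_Icc le_rfl hr.2
  have hint : IntegrableOn (radialEnergyDensity m u u') (Icc a b) :=
    (continuousOn_radialEnergyDensity hpos
      (fun x hx => (hu x hx).continuousWithinAt) hu').integrableOn_Icc
  have h_ar := rpow_sub_one_mul_sq_le_setIntegral ha hr.1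
    (fun x hx => (hu x (hsub hx)).mono hsub) (hint.mono_set hsub) hua
  have h_rb : ∫ s in Icc a r, radialEnergyDensity m u u' s ≤
      ∫ s in Icc a b, radialEnergyDensity m u u' s :=
    setIntegral_mono_set hint
      ((ae_restrict_iff' measurableSet_Icc).2 (ae_of_all _ fun s hs =>
        radialEnergyDensity_nonneg (by positivity) (hpos s hs) u u'))
      hsub.eventuallyLE
  have h_ra : a ^ ((m : ℝ) - 1) ≤ r ^ ((m : ℝ) - 1) :=
    Real.rpow_le_rpow ha.le hr.1 (by linarith)
  exact abs_le_inv_sqrt_mul_rpow_half (by positivity)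
    ((mul_le_mul_of_nonneg_right h_ra (sq_nonneg _)).trans (h_ar.trans h_rb))
end

section
/- Let d ≥ 1 be an integer. Let m, n : ℝ^d × ℝ → ℝ and u : ℝ^d × ℝ → ℝ^d be differentiable at a point (x₀, t₀), and suppose m(x₀, t₀) ≠ 0. Assume the two continuity equations hold at (x₀, t₀): ∂_t m + div_x(m u) = 0 and ∂_t n + div_x(n u) = 0, where div_x(m u) = Σ_{i=1}^d ∂_{x_i}(m u_i) and similarly for n u. Then the ratio n/m satisfies the transport equation at (x₀, t₀): ∂_t(n/m) + u · ∇_x(n/m) = 0. -/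
/-!
Writing `D_V f` for the derivative of `f` along the space-time direction `V = (u, 1)`, the
product rule turns the conservative form into `∂ₜ f + div (f u) = D_V f + f div u`. So both
continuity equations say `D_V m = -m div u` and `D_V n = -n div u`: the masses share the same
logarithmic derivative along `V`, and the quotient rule makes `D_V (n / m)` vanish.
-/

section

variable {𝕜 E : Type*} [NontriviallyNormedField 𝕜] [NormedAddCommGroup E] [NormedSpace 𝕜 E]
  {f g : E → 𝕜} {x : E}

theorem fderiv_div_apply (hf : DifferentiableAt 𝕜 f x) (hg : DifferentiableAt 𝕜 g x)
    (hx : g x ≠ 0) (v : E) :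
    fderiv 𝕜 (fun y => f y / g y) x v
      = (fderiv 𝕜 f x v * g x - f x * fderiv 𝕜 g x v) / g x ^ 2 := by
  have hinv : HasFDerivAt (fun y => (g y)⁻¹) ((-(g x ^ 2)⁻¹) • fderiv 𝕜 g x) x :=
    (hasDerivAt_inv hx).comp_hasFDerivAt x hg.hasFDerivAt
  have hquot : HasFDerivAt (fun y => f y / g y)
      (f x • ((-(g x ^ 2)⁻¹) • fderiv 𝕜 g x) + (g x)⁻¹ • fderiv 𝕜 f x) x := by
    simpa only [div_eq_mul_inv] using hf.hasFDerivAt.fun_mul hinv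
  simp only [hquot.fderiv, add_apply, smul_apply, smul_eq_mul]
  field_simp
  ring

theorem fderiv_add_sum_fderiv_mul_apply {ι : Type*} [Fintype ι] {u : E → ι → 𝕜}
    (hf : DifferentiableAt 𝕜 f x) (hu : ∀ i, DifferentiableAt 𝕜 (fun y => u y i) x)
    (v : E) (w : ι → E) :
    fderiv 𝕜 f x v + ∑ i, fderiv 𝕜 (fun y => f y * u y i) x (w i)
      = fderiv 𝕜 f x (v + ∑ i, u x i • w i)
        + f x * ∑ i, fderiv 𝕜 (fun y => u y i) x (w i) := by
  simp only [fun i => fderiv_fun_mul hf (hu i), add_apply, smul_apply, smul_eq_mul,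
    map_add, map_sum, map_smul, Finset.sum_add_distrib, Finset.mul_sum]
  ring

end

theorem stmt_4_general (d : ℕ)
    (m n : (Fin d → ℝ) × ℝ → ℝ) (u : (Fin d → ℝ) × ℝ → (Fin d → ℝ))
    (p : (Fin d → ℝ) × ℝ)
    (hm : DifferentiableAt ℝ m p) (hn : DifferentiableAt ℝ n p)
    (hu : DifferentiableAt ℝ u p) (hm0 : m p ≠ 0)
    (heqm : fderiv ℝ m p (0, 1)
      + ∑ i, fderiv ℝ (fun q => m q * u q i) p (Pi.single i 1, 0) = 0)
    (heqn : fderiv ℝ n p (0, 1)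
      + ∑ i, fderiv ℝ (fun q => n q * u q i) p (Pi.single i 1, 0) = 0) :
    fderiv ℝ (fun q => n q / m q) p (0, 1)
      + ∑ i, u p i * fderiv ℝ (fun q => n q / m q) p (Pi.single i 1, 0) = 0 := by
  have hui : ∀ i, DifferentiableAt ℝ (fun q => u q i) p := differentiableAt_pi.1 hu
  rw [fderiv_add_sum_fderiv_mul_apply hm hui] at heqm
  rw [fderiv_add_sum_fderiv_mul_apply hn hui] at heqn
  have htransport : fderiv ℝ (fun q => n q / m q) p (0, 1)
        + ∑ i, u p i * fderiv ℝ (fun q => n q / m q) p (Pi.single i 1, 0)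
      = fderiv ℝ (fun q => n q / m q) p
          ((0, 1) + ∑ i, u p i • ((Pi.single i 1 : Fin d → ℝ), (0 : ℝ))) := by
    simp only [map_add, map_sum, map_smul, smul_eq_mul]
  rw [htransport, fderiv_div_apply hn hm hm0, div_eq_zero_iff]
  left
  linear_combination m p * heqn - n p * heqm

/-- The core pointwise computation of Lemma 4.1: if the masses `m` and `n` both
satisfy continuity equations with the same velocity field `u`, then the ratio
`n/m` satisfies the transport equation. -/
theorem stmt_4 (d : ℕ) (hd : 1 ≤ d)
    (m n : (Fin d → ℝ) × ℝ → ℝ) (u : (Fin d → ℝ) × ℝ → (Fin d → ℝ))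
    (p : (Fin d → ℝ) × ℝ)
    (hm : DifferentiableAt ℝ m p) (hn : DifferentiableAt ℝ n p)
    (hu : DifferentiableAt ℝ u p) (hm0 : m p ≠ 0)
    (heqm : fderiv ℝ m p (0, 1)
      + ∑ i, fderiv ℝ (fun q => m q * u q i) p (Pi.single i 1, 0) = 0)
    (heqn : fderiv ℝ n p (0, 1)
      + ∑ i, fderiv ℝ (fun q => n q * u q i) p (Pi.single i 1, 0) = 0) :
    fderiv ℝ (fun q => n q / m q) p (0, 1)
      + ∑ i, u p i * fderiv ℝ (fun q => n q / m q) p (Pi.single i 1, 0) = 0 :=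
  stmt_4_general d m n u p hm hn hu hm0 heqm heqn
end

section
/- Let C⁰, k₀, a₀ > 0 and define the pressure law P(m,n) = C⁰(−b(m,n) + √(b(m,n)² + c(n))) where b(m,n) = k₀ − m − a₀ n and c(n) = 4 k₀ a₀ n. Then for every m ≥ 0 and every n > 0, the function n ↦ P(m,n) is differentiable at n, its derivative equals C⁰ ( a₀ + a₀ (m + a₀ n + k₀)/√(b(m,n)² + c(n)) ), and this derivative is strictly positive. -/
/-! With `s = √(b² + c)`, the chain rule gives `∂P/∂n = C⁰ (a₀ + a₀ (2k₀ - b) / s)`, and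
`2k₀ - b = m + a₀ n + k₀`. Positivity holds because `s + 2k₀ - b > 0`: indeed `s > |b|` once
`c > 0`. -/

open Real

theorem HasDerivAt.neg_add_sqrt_sq_add {f g : ℝ → ℝ} {f' g' x : ℝ}
    (hf : HasDerivAt f f' x) (hg : HasDerivAt g g' x) (hpos : 0 < f x ^ 2 + g x) :
    HasDerivAt (fun y => -f y + √(f y ^ 2 + g y))
      (-f' + (2 * f x * f' + g') / (2 * √(f x ^ 2 + g x))) x := by
  have hsq : HasDerivAt (fun y => f y ^ 2 + g y) (2 * f x * f' + g') x := by
    refine ((hf.fun_pow 2).fun_add hg).congr_deriv ?_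
    norm_num
  exact hf.neg.add (hsq.sqrt hpos.ne')

theorem lt_sqrt_sq_add {b c : ℝ} (hc : 0 < c) : b < √(b ^ 2 + c) :=
  calc b ≤ |b| := le_abs_self b
    _ = √(b ^ 2) := (sqrt_sq_eq_abs b).symm
    _ < √(b ^ 2 + c) := sqrt_lt_sqrt (sq_nonneg b) (by linarith)

theorem stmt_9_general (C0 k0 a0 : ℝ) (hC : 0 < C0) (hk : 0 < k0) (ha : 0 < a0)
    (m n : ℝ) (hn : 0 < n) :
    HasDerivAt (fun n' => C0 * (-(k0 - m - a0 * n')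
        + Real.sqrt ((k0 - m - a0 * n') ^ 2 + 4 * k0 * a0 * n')))
      (C0 * (a0 + a0 * (m + a0 * n + k0)
        / Real.sqrt ((k0 - m - a0 * n) ^ 2 + 4 * k0 * a0 * n))) n ∧
    0 < C0 * (a0 + a0 * (m + a0 * n + k0)
        / Real.sqrt ((k0 - m - a0 * n) ^ 2 + 4 * k0 * a0 * n)) := by
  set b := k0 - m - a0 * n
  have hc : 0 < 4 * k0 * a0 * n := by positivity
  have hs : 0 < √(b ^ 2 + 4 * k0 * a0 * n) := sqrt_pos.mpr (by positivity)
  have hb : HasDerivAt (fun n' => k0 - m - a0 * n') (-a0) n := by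
    simpa using ((hasDerivAt_id n).const_mul a0).const_sub (k0 - m)
  have hlin : HasDerivAt (fun n' => 4 * k0 * a0 * n') (4 * k0 * a0) n := by
    simpa using (hasDerivAt_id n).const_mul (4 * k0 * a0)
  constructor
  · refine ((hb.neg_add_sqrt_sq_add hlin (by positivity)).const_mul C0).congr_deriv ?_
    field_simp
    ring
  · set s := √(b ^ 2 + 4 * k0 * a0 * n)
    have hsum : 0 < s + (m + a0 * n + k0) := by
      have := lt_sqrt_sq_add (b := b) hc
      linarith
    have hfactor : a0 + a0 * (m + a0 * n + k0) / s = a0 * (s + (m + a0 * n + k0)) / s := by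
      field_simp
    rw [hfactor]
    positivity

/-- Formula (4.9) of Lemma 4.2: differentiability of the two-phase pressure law
in `n`, the formula for `∂P/∂n`, and its strict positivity. -/
theorem stmt_9 (C0 k0 a0 : ℝ) (hC : 0 < C0) (hk : 0 < k0) (ha : 0 < a0)
    (m n : ℝ) (hm : 0 ≤ m) (hn : 0 < n) :
    HasDerivAt (fun n' => C0 * (-(k0 - m - a0 * n')
        + Real.sqrt ((k0 - m - a0 * n') ^ 2 + 4 * k0 * a0 * n')))
      (C0 * (a0 + a0 * (m + a0 * n + k0)
        / Real.sqrt ((k0 - m - a0 * n) ^ 2 + 4 * k0 * a0 * n))) n ∧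
    0 < C0 * (a0 + a0 * (m + a0 * n + k0)
        / Real.sqrt ((k0 - m - a0 * n) ^ 2 + 4 * k0 * a0 * n)) :=
  stmt_9_general C0 k0 a0 hC hk ha m n hn
end

section
/- Let k₀, a₀, s₀ > 0 and let m, n > 0 satisfy s₀ m ≤ n. Then (m + a₀ n + k₀)² / ( (k₀ − m − a₀ n)² + 4 k₀ a₀ n ) ≤ 1 + 2/(a₀ s₀). -/
/-!
Expanding the square, `(m + a₀n + k₀)² = D + 4k₀m` with `D = (k₀ - m - a₀n)² + 4k₀a₀n ≥ 4k₀a₀n`,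
so the quotient is at most `1 + 4k₀m / (4k₀a₀n) = 1 + m / (a₀n)`, and `s₀m ≤ n` bounds
`m / (a₀n)` by `1 / (a₀s₀)`.
-/

lemma sq_add_add_eq_sq_sub_sub_add (k a m n : ℝ) :
    (m + a * n + k) ^ 2 = (k - m - a * n) ^ 2 + 4 * k * a * n + 4 * k * m := by
  ring

lemma add_div_le_one_add_div {D L x : ℝ} (hL : 0 < L) (hLD : L ≤ D) (hx : 0 ≤ x) :
    (D + x) / D ≤ 1 + x / L := by
  rw [add_div, div_self (hL.trans_le hLD).ne']
  gcongr

lemma div_mul_le_one_div_mul {a s m n : ℝ} (ha : 0 < a) (hs : 0 < s) (hn : 0 < n)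
    (hsm : s * m ≤ n) : m / (a * n) ≤ 1 / (a * s) := by
  rw [div_le_div_iff₀ (by positivity) (by positivity)]
  nlinarith

theorem stmt_10_general (k0 a0 s0 m n : ℝ) (hk : 0 < k0) (ha : 0 < a0) (hs : 0 < s0)
    (hm : 0 < m) (hsm : s0 * m ≤ n) :
    (m + a0 * n + k0) ^ 2 / ((k0 - m - a0 * n) ^ 2 + 4 * k0 * a0 * n)
      ≤ 1 + 2 / (a0 * s0) := by
  have hn : 0 < n := (mul_pos hs hm).trans_le hsm
  have hD : 4 * k0 * a0 * n ≤ (k0 - m - a0 * n) ^ 2 + 4 * k0 * a0 * n :=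
    le_add_of_nonneg_left (sq_nonneg _)
  calc (m + a0 * n + k0) ^ 2 / ((k0 - m - a0 * n) ^ 2 + 4 * k0 * a0 * n)
      ≤ 1 + 4 * k0 * m / (4 * k0 * a0 * n) := by
        rw [sq_add_add_eq_sq_sub_sub_add]
        exact add_div_le_one_add_div (by positivity) hD (by positivity)
    _ = 1 + m / (a0 * n) := by
        congr 1; field_simp
    _ ≤ 1 + 1 / (a0 * s0) := by grw [div_mul_le_one_div_mul ha hs hn hsm]
    _ ≤ 1 + 2 / (a0 * s0) := by gcongr; norm_num

/-- The key algebraic inequality in the proof of (4.7) of Lemma 4.2. -/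
theorem stmt_10 (k0 a0 s0 m n : ℝ) (hk : 0 < k0) (ha : 0 < a0) (hs : 0 < s0)
    (hm : 0 < m) (hn : 0 < n) (hsm : s0 * m ≤ n) :
    (m + a0 * n + k0) ^ 2 / ((k0 - m - a0 * n) ^ 2 + 4 * k0 * a0 * n)
      ≤ 1 + 2 / (a0 * s0) :=
  stmt_10_general k0 a0 s0 m n hk ha hs hm hsm
end

section
/- Let C⁰, k₀, a₀, s̄₀ > 0 and define the pressure law P(m,n) = C⁰(−b(m,n) + √(b(m,n)² + c(n))) where b(m,n) = k₀ − m − a₀ n and c(n) = 4 k₀ a₀ n. Then there exists a constant C > 0, depending only on C⁰, k₀, a₀ and s̄₀, such that for all m ≥ 0 and all n with 0 ≤ n ≤ s̄₀ m, one has P(m,n) ≤ C (1 + m). -/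
/-!
Writing `b = k₀ - m - a₀ n`, one has the identity `b² + 4 k₀ a₀ n = (m + k₀ + a₀ n)² - 4 k₀ m`,
so for `m ≥ 0` the square root is at most `m + k₀ + a₀ n` and `P(m,n) ≤ 2 C⁰ (m + a₀ n)`.
The constraint `n ≤ s̄₀ m` then makes this linear in `m`.
-/

noncomputable def pressure (C0 k0 a0 m n : ℝ) : ℝ :=
  C0 * (-(k0 - m - a0 * n) + Real.sqrt ((k0 - m - a0 * n) ^ 2 + 4 * k0 * a0 * n))

lemma sqrt_pressure_discriminant_le {k0 a0 m n : ℝ} (hk : 0 ≤ k0) (ha : 0 ≤ a0) (hm : 0 ≤ m)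
    (hn : 0 ≤ n) :
    Real.sqrt ((k0 - m - a0 * n) ^ 2 + 4 * k0 * a0 * n) ≤ m + k0 + a0 * n := by
  have hdisc : (k0 - m - a0 * n) ^ 2 + 4 * k0 * a0 * n = (m + k0 + a0 * n) ^ 2 - 4 * k0 * m := by
    ring
  rw [Real.sqrt_le_iff, hdisc]
  constructor <;> nlinarith [mul_nonneg hk hm, mul_nonneg ha hn]

lemma pressure_le_two_mul {C0 k0 a0 m n : ℝ} (hC : 0 ≤ C0) (hk : 0 ≤ k0) (ha : 0 ≤ a0)
    (hm : 0 ≤ m) (hn : 0 ≤ n) :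
    pressure C0 k0 a0 m n ≤ 2 * C0 * (m + a0 * n) := by
  have hsqrt := sqrt_pressure_discriminant_le hk ha hm hn
  calc pressure C0 k0 a0 m n
      ≤ C0 * (-(k0 - m - a0 * n) + (m + k0 + a0 * n)) := by
        unfold pressure; gcongr
    _ = 2 * C0 * (m + a0 * n) := by ring

/-- The upper bound in assertion (4.5) of Lemma 4.2: `P(m,n) ≤ C (1 + m)`
under the constraint `n ≤ s̄₀ m`. -/
theorem stmt_11 (C0 k0 a0 sbar : ℝ) (hC : 0 < C0) (hk : 0 < k0) (ha : 0 < a0)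
    (hsbar : 0 < sbar) :
    ∃ C : ℝ, 0 < C ∧ ∀ m n : ℝ, 0 ≤ m → 0 ≤ n → n ≤ sbar * m →
      C0 * (-(k0 - m - a0 * n)
        + Real.sqrt ((k0 - m - a0 * n) ^ 2 + 4 * k0 * a0 * n)) ≤ C * (1 + m) := by
  refine ⟨2 * C0 * (1 + a0 * sbar), by positivity, fun m n hm hn hns => ?_⟩
  have hlin : m + a0 * n ≤ (1 + a0 * sbar) * (1 + m) := by
    nlinarith [mul_le_mul_of_nonneg_left hns ha.le, mul_nonneg ha.le hsbar.le]
  calc pressure C0 k0 a0 m n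
      ≤ 2 * C0 * (m + a0 * n) := pressure_le_two_mul hC.le hk.le ha.le hm hn
    _ ≤ 2 * C0 * ((1 + a0 * sbar) * (1 + m)) := by gcongr
    _ = 2 * C0 * (1 + a0 * sbar) * (1 + m) := by ring
end

section
/- Let C⁰, k₀, a₀, s̄₀, M > 0 and define the pressure law P(m,n) = C⁰(−b(m,n) + √(b(m,n)² + c(n))) where b(m,n) = k₀ − m − a₀ n and c(n) = 4 k₀ a₀ n. Then there exists a constant C > 0, depending only on C⁰, k₀, a₀, s̄₀ and M, such that for all m with 0 ≤ m ≤ M and all n with 0 ≤ n ≤ s̄₀ m, one has P(m,n) ≤ C √m. -/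
/-!
Since `√(b² + c) ≤ |b| + √c`, the pressure is at most `C⁰ (|b| - b + √c)`. Here `|b| - b`
vanishes unless `b < 0`, and then it equals `2(m + a₀ n - k₀) ≤ 2(m + a₀ n)`, which is linear in
`m` once `n ≤ s̄₀ m`, hence `O(√m)` for `m ≤ M`; and `√c = √(4 k₀ a₀ n) ≤ √(4 k₀ a₀ s̄₀) √m`.
-/

open Real

lemma sqrt_sq_add_le_abs_add_sqrt (b : ℝ) {c : ℝ} (hc : 0 ≤ c) : √(b ^ 2 + c) ≤ |b| + √c := by
  rw [sqrt_le_iff]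
  refine ⟨by positivity, ?_⟩
  nlinarith [sq_abs b, sq_sqrt hc, abs_nonneg b, sqrt_nonneg c]

lemma neg_add_sqrt_sq_add_le {b c x : ℝ} (hc : 0 ≤ c) (hb : -b ≤ x) (hx : 0 ≤ x) :
    -b + √(b ^ 2 + c) ≤ 2 * x + √c := by
  have := sqrt_sq_add_le_abs_add_sqrt b hc
  rcases abs_cases b with ⟨h, _⟩ | ⟨h, _⟩ <;> linarith

lemma le_sqrt_mul_sqrt_of_le {m M : ℝ} (hm : 0 ≤ m) (hmM : m ≤ M) : m ≤ √M * √m :=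
  calc m = √m * √m := (mul_self_sqrt hm).symm
    _ ≤ √M * √m := by gcongr

lemma sqrt_mul_le_sqrt_mul_mul_sqrt {K s m n : ℝ} (hK : 0 ≤ K) (hm : 0 ≤ m) (hn : n ≤ s * m) :
    √(K * n) ≤ √(K * s) * √m := by
  rw [← sqrt_mul' _ hm, mul_assoc]
  gcongr

theorem stmt_12_general (C0 k0 a0 sbar M : ℝ) (hC : 0 < C0) (hk : 0 < k0) (ha : 0 < a0)
    (hsbar : 0 < sbar) :
    ∃ C : ℝ, 0 < C ∧ ∀ m n : ℝ, 0 ≤ m → m ≤ M → 0 ≤ n → n ≤ sbar * m →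
      C0 * (-(k0 - m - a0 * n)
        + Real.sqrt ((k0 - m - a0 * n) ^ 2 + 4 * k0 * a0 * n)) ≤ C * Real.sqrt m := by
  refine ⟨C0 * (2 * (1 + a0 * sbar) * √M + √(4 * k0 * a0 * sbar)), by positivity, ?_⟩
  intro m n hm hmM hn hns
  have hpressure := neg_add_sqrt_sq_add_le (b := k0 - m - a0 * n) (x := m + a0 * n)
    (by positivity : 0 ≤ 4 * k0 * a0 * n) (by linarith) (by positivity)
  have hlinear : m + a0 * n ≤ (1 + a0 * sbar) * (√M * √m) :=
    calc m + a0 * n ≤ (1 + a0 * sbar) * m := by nlinarith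
      _ ≤ (1 + a0 * sbar) * (√M * √m) := by gcongr; exact le_sqrt_mul_sqrt_of_le hm hmM
  have hroot := sqrt_mul_le_sqrt_mul_mul_sqrt (K := 4 * k0 * a0) (by positivity) hm hns
  calc C0 * (-(k0 - m - a0 * n) + √((k0 - m - a0 * n) ^ 2 + 4 * k0 * a0 * n))
      ≤ C0 * (2 * ((1 + a0 * sbar) * (√M * √m)) + √(4 * k0 * a0 * sbar) * √m) :=
        mul_le_mul_of_nonneg_left (by linarith) hC.le
    _ = C0 * (2 * (1 + a0 * sbar) * √M + √(4 * k0 * a0 * sbar)) * √m := by ring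

/-- The bound `P(m,n) ≤ C √m` used in the proof of Lemma 5.2, valid when
`0 ≤ m ≤ M` and `0 ≤ n ≤ s̄₀ m`. -/
theorem stmt_12 (C0 k0 a0 sbar M : ℝ) (hC : 0 < C0) (hk : 0 < k0) (ha : 0 < a0)
    (hsbar : 0 < sbar) (hM : 0 < M) :
    ∃ C : ℝ, 0 < C ∧ ∀ m n : ℝ, 0 ≤ m → m ≤ M → 0 ≤ n → n ≤ sbar * m →
      C0 * (-(k0 - m - a0 * n)
        + Real.sqrt ((k0 - m - a0 * n) ^ 2 + 4 * k0 * a0 * n)) ≤ C * Real.sqrt m :=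
  stmt_12_general C0 k0 a0 sbar M hC hk ha hsbar
end
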